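/- For every m ∈ ℕ*, the monomial y^{2m} admits the representation y^{2m} = Σ_{j=1}^m (−1)^{m+j} (c_{j,m}/c_{m,m}) y^j H_j(y), where H_j is the j-th (probabilists') Hermite polynomial and c_{j,m} are defined by the recursion c_{1,1} = −1, c_{j,m} = (2j/(m−1) − 4) c_{j,m−1} 1_{j<m} + (2/(m−1)) c_{j−1,m−1} 1_{j>1}. -/
import Mathlib

/-- The coefficients `c_{j,m}`: `c_{1,1} = −1` and for `m ≥ 2`,
`c_{j,m} = (2j/(m−1) − 4)·c_{j,m−1}·1_{j<m} + (2/(m−1))·c_{j−1,m−1}·1_{j>1}`. -/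
noncomputable def cCoef : ℕ → ℕ → ℝ
  | _, 0 => 0
  | j, 1 => if j = 1 then -1 else 0
  | j, m + 2 =>
      (if j < m + 2 then (2 * (j : ℝ) / ((m : ℝ) + 1) - 4) * cCoef j (m + 1) else 0)
      + (if 1 < j then 2 / ((m : ℝ) + 1) * cCoef (j - 1) (m + 1) else 0)

open Polynomial Finset

lemma derivHermite (n : ℕ) :
    Polynomial.derivative (Polynomial.hermite (n+1)) = ((n : ℤ[X]) + 1) * Polynomial.hermite n := by
  induction n with
  | zero => simp [Polynomial.hermite_one, Polynomial.hermite_zero]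
  | succ n ih =>
    have hd : Polynomial.derivative (Polynomial.hermite n)
        = X * Polynomial.hermite n - Polynomial.hermite (n+1) := by
      rw [Polynomial.hermite_succ]; ring
    rw [Polynomial.hermite_succ (n+1), derivative_sub, derivative_mul, derivative_X, one_mul, ih,
      derivative_mul, hd]
    ring_nf
    simp [derivative_natCast]
    ring

/-- real-mapped Hermite polynomial -/
noncomputable def Hr (j : ℕ) : ℝ[X] := (Polynomial.hermite j).map (algebraMap ℤ ℝ)

lemma Hr_zero : Hr 0 = 1 := by simp [Hr, Polynomial.hermite_zero]
lemma Hr_one : Hr 1 = X := by simp [Hr, Polynomial.hermite_one]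

lemma Hr_deriv (n : ℕ) : derivative (Hr (n+1)) = ((n : ℝ[X]) + 1) * Hr n := by
  rw [Hr, derivative_map, derivHermite]
  push_cast [Polynomial.map_mul]
  simp [Hr]

lemma Hr_succ (n : ℕ) : Hr (n+2) = X * Hr (n+1) - ((n : ℝ[X]) + 1) * Hr n := by
  have := congrArg (Polynomial.map (algebraMap ℤ ℝ)) (Polynomial.hermite_succ (n+1))
  rw [Polynomial.map_sub, Polynomial.map_mul, Polynomial.map_X] at this
  rw [Hr, this, ← derivative_map, ← Hr, Hr_deriv]

lemma eval_Hr (y : ℝ) (j : ℕ) : Polynomial.eval y (Hr j) = Polynomial.aeval y (Polynomial.hermite j) := by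
  rw [Hr, Polynomial.eval_map, Polynomial.aeval_def]

/-- the normalized coefficients -/
noncomputable def aC (j m : ℕ) : ℝ := (-1 : ℝ) ^ (m + j) * (cCoef j m / cCoef m m)

lemma cCoef_one_one : cCoef 1 1 = -1 := by simp [cCoef]

lemma cCoef_diag_succ (n : ℕ) :
    cCoef (n+2) (n+2) = 2 / ((n : ℝ) + 1) * cCoef (n+1) (n+1) := by
  rw [cCoef]
  simp

lemma cCoef_diag_ne (m : ℕ) (hm : 1 ≤ m) : cCoef m m ≠ 0 := by
  induction m with
  | zero => omega
  | succ n ih =>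
    rcases Nat.lt_or_ge n 1 with h | h
    · interval_cases n
      rw [cCoef_one_one]; norm_num
    · obtain ⟨k, rfl⟩ : ∃ k, n = k + 1 := ⟨n - 1, by omega⟩
      rw [cCoef_diag_succ]
      have hk : ((k : ℝ) + 1) ≠ 0 := by positivity
      have h2 := ih h
      intro hc
      rcases mul_eq_zero.mp hc with h3 | h3
      · rw [_root_.div_eq_zero_iff] at h3; norm_num at h3; exact hk h3
      · exact h2 h3

lemma aC_one_one : aC 1 1 = 1 := by simp [aC, cCoef_one_one]

lemma aC_key (m k : ℕ) (hm : 1 ≤ m) :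
    aC (k+1) (m+1) = (if k+1 ≤ m then ((2*m : ℝ) - (k+1)) * aC (k+1) m else 0)
      + (if 1 ≤ k then aC k m else 0) := by
  obtain ⟨n, rfl⟩ : ∃ n, m = n + 1 := ⟨m - 1, by omega⟩
  have hD : cCoef (n+1) (n+1) ≠ 0 := cCoef_diag_ne _ (by omega)
  have hn : ((n : ℝ) + 1) ≠ 0 := by positivity
  have hlhs : cCoef (k+1) (n+1+1)
      = (if k+1 < n+2 then (2*((k:ℝ)+1)/((n:ℝ)+1) - 4) * cCoef (k+1) (n+1) else 0)
        + (if 1 < k+1 then 2/((n:ℝ)+1) * cCoef k (n+1) else 0) := by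
    rw [show (n+1+1 : ℕ) = n+2 from rfl, cCoef]
    push_cast
    norm_num
  have s1 : ((-1 : ℝ)) ^ (n+1+1+(k+1)) = -(-1 : ℝ) ^ (n+k) := by
    rw [show n+1+1+(k+1) = (n+k)+3 by ring, pow_add]; norm_num
  have s2 : ((-1 : ℝ)) ^ (n+1+(k+1)) = (-1 : ℝ) ^ (n+k) := by
    rw [show n+1+(k+1) = (n+k)+2 by ring, pow_add]; norm_num
  have s3 : ((-1 : ℝ)) ^ (n+1+k) = -(-1 : ℝ) ^ (n+k) := by
    rw [show n+1+k = (n+k)+1 by ring, pow_add]; norm_num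
  simp only [aC, hlhs, show (n+1+1 : ℕ) = n+2 from rfl, cCoef_diag_succ, s1, s2, s3]
  push_cast
  split_ifs <;> first | (exfalso; omega) | (field_simp; ring)

lemma aC_key' (m j : ℕ) (hm : 1 ≤ m) (hj : 1 ≤ j) :
    aC j (m+1) = (if j ≤ m then ((2*m : ℝ) - j) * aC j m else 0)
      + (if 2 ≤ j then aC (j-1) m else 0) := by
  obtain ⟨k, rfl⟩ : ∃ k, j = k + 1 := ⟨j - 1, by omega⟩
  rw [aC_key m k hm]
  congr 1
  · push_cast
    rfl
  by_cases hk : 1 ≤ k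
  · rw [if_pos hk, if_pos (by omega : 2 ≤ k+1)]
    norm_num
  · rw [if_neg hk, if_neg (by omega : ¬ 2 ≤ k+1)]

theorem key (m : ℕ) (hm : 1 ≤ m) :
    (X : ℝ[X]) ^ (2*m) = ∑ j ∈ Finset.Icc 1 m, C (aC j m) * X ^ j * Hr j := by
  induction m, hm using Nat.le_induction with
  | base =>
    simp [aC_one_one, Hr_one]
    ring
  | succ m hm ih =>
    -- Step 1: the derivative identity
    have hterm : ∀ j ∈ Finset.Icc 1 m, X * derivative (C (aC j m) * X ^ j * Hr j)
        = (j : ℝ[X]) * (C (aC j m) * X ^ j * Hr j)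
          + C (aC j m) * ((j : ℝ[X]) * (X ^ (j+1) * Hr (j-1))) := by
      intro j hj
      have hj1 : 1 ≤ j := (Finset.mem_Icc.mp hj).1
      obtain ⟨k, rfl⟩ : ∃ k, j = k + 1 := ⟨j - 1, by omega⟩
      simp only [derivative_mul, derivative_C, derivative_X_pow, Hr_deriv, zero_mul, zero_add,
        Nat.add_sub_cancel, Nat.cast_add, Nat.cast_one, map_add, map_natCast, map_one]
      ring
    have hderiv : (C (((2*m : ℕ) : ℝ))) * X ^ (2*m)
        = ∑ j ∈ Finset.Icc 1 m, ((j : ℝ[X]) * (C (aC j m) * X ^ j * Hr j)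
            + C (aC j m) * ((j : ℝ[X]) * (X ^ (j+1) * Hr (j-1)))) := by
      have h1 : X * derivative ((X : ℝ[X]) ^ (2*m)) = C (((2*m : ℕ) : ℝ)) * X ^ (2*m) := by
        rw [derivative_X_pow]
        have h2 : X * (C (((2*m : ℕ) : ℝ)) * X ^ (2*m-1))
            = C (((2*m : ℕ) : ℝ)) * (X ^ (2*m-1) * X) := by ring
        rw [h2, ← pow_succ, show 2*m-1+1 = 2*m by omega]
      rw [← h1, ih, derivative_sum, Finset.mul_sum]
      exact Finset.sum_congr rfl hterm
    -- Step 2: key sum identity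
    have hE : ∑ j ∈ Finset.Icc 1 m, C (aC j m) * ((j : ℝ[X]) * (X ^ (j+1) * Hr (j-1)))
        = ∑ j ∈ Finset.Icc 1 m, C (((2*m : ℝ) - j) * aC j m) * X ^ j * Hr j := by
      have h3 : ∑ j ∈ Finset.Icc 1 m, C (aC j m) * ((j : ℝ[X]) * (X ^ (j+1) * Hr (j-1)))
          = C (((2*m : ℕ) : ℝ)) * X ^ (2*m)
            - ∑ j ∈ Finset.Icc 1 m, (j : ℝ[X]) * (C (aC j m) * X ^ j * Hr j) := by
        rw [hderiv, Finset.sum_add_distrib]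
        ring
      rw [h3, ih, Finset.mul_sum, ← Finset.sum_sub_distrib]
      refine Finset.sum_congr rfl fun j hj => ?_
      simp only [map_sub, map_mul, map_natCast, map_ofNat, Polynomial.C_eq_natCast]
      push_cast
      ring
    -- Step 3: assemble
    have h4 : (X : ℝ[X]) ^ (2*(m+1))
        = ∑ j ∈ Finset.Icc 1 m, C (aC j m) * X ^ (j+2) * Hr j := by
      rw [show 2*(m+1) = 2 + 2*m by ring, pow_add, ih, Finset.mul_sum]
      refine Finset.sum_congr rfl fun j hj => ?_
      ring
    have h5 : ∀ j ∈ Finset.Icc 1 m, C (aC j m) * X ^ (j+2) * Hr j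
        = C (aC j m) * X ^ (j+1) * Hr (j+1)
          + C (aC j m) * ((j : ℝ[X]) * (X ^ (j+1) * Hr (j-1))) := by
      intro j hj
      have hj1 : 1 ≤ j := (Finset.mem_Icc.mp hj).1
      obtain ⟨k, rfl⟩ : ∃ k, j = k + 1 := ⟨j - 1, by omega⟩
      rw [show k+1+1 = k+2 from rfl, Hr_succ]
      simp only [Nat.add_sub_cancel, Nat.cast_add, Nat.cast_one]
      ring
    have h6 : (X : ℝ[X]) ^ (2*(m+1))
        = ∑ j ∈ Finset.Icc 1 m, C (aC j m) * X ^ (j+1) * Hr (j+1)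
          + ∑ j ∈ Finset.Icc 1 m, C (((2*m : ℝ) - j) * aC j m) * X ^ j * Hr j := by
      rw [h4, Finset.sum_congr rfl h5, Finset.sum_add_distrib, hE]
    -- reindex the first sum
    have h7 : ∑ j ∈ Finset.Icc 1 m, C (aC j m) * X ^ (j+1) * Hr (j+1)
        = ∑ j ∈ Finset.Icc 2 (m+1), C (aC (j-1) m) * X ^ j * Hr j := by
      rw [show Finset.Icc 2 (m+1) = Finset.map (addRightEmbedding 1) (Finset.Icc 1 m) by
        rw [Finset.map_add_right_Icc]]
      rw [Finset.sum_map]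
      refine Finset.sum_congr rfl fun j hj => ?_
      simp [addRightEmbedding]
    -- expand target with aC_key'
    have h8 : ∑ j ∈ Finset.Icc 1 (m+1), C (aC j (m+1)) * X ^ j * Hr j
        = ∑ j ∈ Finset.Icc 1 (m+1),
            ((if j ≤ m then C (((2*m : ℝ) - j) * aC j m) * X ^ j * Hr j else 0)
              + (if 2 ≤ j then C (aC (j-1) m) * X ^ j * Hr j else 0)) := by
      refine Finset.sum_congr rfl fun j hj => ?_
      have hj1 : 1 ≤ j := (Finset.mem_Icc.mp hj).1
      rw [aC_key' m j hm hj1, map_add, add_mul, add_mul]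
      congr 1
      · split_ifs <;> simp
      · split_ifs <;> simp
    have hf1 : Finset.filter (fun j => j ≤ m) (Finset.Icc 1 (m+1)) = Finset.Icc 1 m := by
      ext x; simp only [Finset.mem_filter, Finset.mem_Icc]; omega
    have hf2 : Finset.filter (fun j => 2 ≤ j) (Finset.Icc 1 (m+1)) = Finset.Icc 2 (m+1) := by
      ext x; simp only [Finset.mem_filter, Finset.mem_Icc]; omega
    rw [h8, Finset.sum_add_distrib, ← Finset.sum_filter, ← Finset.sum_filter, hf1, hf2,
      ← h7, ← hE]
    rw [h6, hE, h7]
    ring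

/-- The representation `y^{2m} = Σ_{j=1}^m (−1)^{m+j} (c_{j,m}/c_{m,m}) y^j H_j(y)` with
`H_j` the `j`-th probabilists' Hermite polynomial. -/
theorem stmt_8 (m : ℕ) (hm : 1 ≤ m) (y : ℝ) :
    y ^ (2 * m) =
      ∑ j ∈ Finset.Icc 1 m, (-1 : ℝ) ^ (m + j) * (cCoef j m / cCoef m m) * y ^ j *
        Polynomial.aeval y (Polynomial.hermite j) := by
  have h := congrArg (Polynomial.eval y) (key m hm)
  simpa [Polynomial.eval_finset_sum, eval_Hr, aC, mul_assoc] using h
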